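/- Let (Q,H) be a loop-free quiver with reduced homotopy, k a vertex, and μ̃_k(Q,H) = (Q',H') its pre-mutation. Let Q^{†,1} and Q^{†,2} be two quivers obtained from Q' by (possibly different) maximal iterative deletions of 2-cycles lying in H'. Then there exists a quiver isomorphism η: Q^{†,1} → Q^{†,2} fixing the vertex set such that ψ₂ ∘ η = ψ₁, where ψ_v: π(Q^{†,v}) → π(Q')/H' (v = 1,2) are the full functors induced by the inclusions Q^{†,v} ⊆ Q'. In particular the mutation μ_k(Q,H) is well defined up to a vertex-fixing isomorphism translating the homotopies. -/

import Mathlib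

namespace CMu

/-- A (locally small) quiver with vertex type `V`: a type of arrows together with
source and target maps.  All quivers in a given statement share the vertex type. -/
structure Quiv (V : Type) where
  Arrow : Type
  src : Arrow → V
  tgt : Arrow → V

variable {V : Type}

namespace Quiv

/-- A quiver is loop-free if no arrow has equal source and target. -/
def LoopFree (Q : Quiv V) : Prop := ∀ a : Q.Arrow, Q.src a ≠ Q.tgt a

/-- A quiver is `2`-acyclic if it contains no oriented `2`-cycle, i.e. there is no pair of
arrows `a, b` with `t a = s b` and `t b = s a` (a loop forms a `2`-cycle with itself). -/
def TwoAcyclic (Q : Quiv V) : Prop :=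
  ∀ a b : Q.Arrow, Q.tgt a = Q.src b → Q.tgt b = Q.src a → False

/-- A quiver is locally finite if each vertex is the source (resp. target) of only
finitely many arrows. -/
def LocallyFinite (Q : Quiv V) : Prop :=
  ∀ v : V, {a : Q.Arrow | Q.src a = v}.Finite ∧ {a : Q.Arrow | Q.tgt a = v}.Finite

/-- The number of arrows from `i` to `j`. -/
noncomputable def nArrows (Q : Quiv V) (i j : V) : ℕ :=
  Nat.card {a : Q.Arrow // Q.src a = i ∧ Q.tgt a = j}

end Quiv

/-- A step of a walk in the underlying graph of a quiver: an arrow traversed forwards,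
or an arrow traversed backwards (its formal inverse). -/
inductive Step (Q : Quiv V) : V → V → Type where
  | fwd (a : Q.Arrow) : Step Q (Q.src a) (Q.tgt a)
  | bwd (a : Q.Arrow) : Step Q (Q.tgt a) (Q.src a)

/-- The inverse of a step. -/
def Step.inv {Q : Quiv V} : {x y : V} → Step Q x y → Step Q y x
  | _, _, .fwd a => .bwd a
  | _, _, .bwd a => .fwd a

/-- A step is forward if it traverses an arrow in its own direction. -/
def Step.IsFwd {Q : Quiv V} : {x y : V} → Step Q x y → Prop
  | _, _, .fwd _ => True
  | _, _, .bwd _ => False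

/-- A walk in (the underlying graph of) a quiver `Q` from `x` to `y`:
a word in the arrows of `Q` and their formal inverses. -/
inductive Walk (Q : Quiv V) : V → V → Type where
  | nil (v : V) : Walk Q v v
  | cons {x y z : V} (e : Step Q x y) (w : Walk Q y z) : Walk Q x z

namespace Walk

/-- Composition (concatenation) of walks. -/
def comp {Q : Quiv V} : {x y z : V} → Walk Q x y → Walk Q y z → Walk Q x z
  | _, _, _, .nil _, w => w
  | _, _, _, .cons e u, w => .cons e (comp u w)

/-- The walk consisting of a single step. -/
def single {Q : Quiv V} {x y : V} (e : Step Q x y) : Walk Q x y := .cons e (.nil _)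

/-- The inverse (reversal) of a walk. -/
def inv {Q : Quiv V} : {x y : V} → Walk Q x y → Walk Q y x
  | _, _, .nil v => .nil v
  | _, _, .cons e u => (inv u).comp (single e.inv)

/-- Transport a walk along equalities of its endpoints. -/
def cast {Q : Quiv V} {x y x' y' : V} (hx : x = x') (hy : y = y') (w : Walk Q x y) :
    Walk Q x' y' := by subst hx; subst hy; exact w

/-- A walk is a (directed) path if all of its steps are forward. -/
def AllFwd {Q : Quiv V} : {x y : V} → Walk Q x y → Prop
  | _, _, .nil _ => True
  | _, _, .cons e w => e.IsFwd ∧ AllFwd w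

end Walk

/-- A quiver is acyclic if it contains no (nontrivial) oriented cycle. -/
def Quiv.Acyclic (Q : Quiv V) : Prop :=
  ∀ (v : V) (w : Walk Q v v), w.AllFwd → w = .nil v

/-- A quiver is connected if any two vertices are joined by a walk. -/
def Quiv.Connected (Q : Quiv V) : Prop := ∀ x y : V, Nonempty (Walk Q x y)

/-- Free homotopy of walks: the equivalence relation on walks generated by cancelling
`e ⬝ e⁻¹`.  Two walks are homotopic iff they have the same reduction, so that the morphisms
of the free groupoid `π(Q)` from `x` to `y` are the homotopy classes of walks from `x` to `y`. -/
inductive WalkHtpy (Q : Quiv V) : {x y : V} → Walk Q x y → Walk Q x y → Prop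
  | refl {x y : V} (w : Walk Q x y) : WalkHtpy Q w w
  | symm {x y : V} {w u : Walk Q x y} : WalkHtpy Q w u → WalkHtpy Q u w
  | trans {x y : V} {w u t : Walk Q x y} : WalkHtpy Q w u → WalkHtpy Q u t → WalkHtpy Q w t
  | cancel {x y z : V} (e : Step Q x y) (w : Walk Q x z) :
      WalkHtpy Q (.cons e (.cons e.inv w)) w
  | congr {x y z : V} (e : Step Q x y) {w u : Walk Q y z} :
      WalkHtpy Q w u → WalkHtpy Q (.cons e w) (.cons e u)

/-- A family of sets of cyclic walks, one at each vertex.  Such a family, when it satisfies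
`IsHomotopy`, encodes a normal subgroupoid (a *homotopy*) `H` of the free groupoid `π(Q)`:
`H(v,v)` is the set of homotopy classes of the walks in the family at `v`. -/
def HSet (Q : Quiv V) := ∀ v : V, Set (Walk Q v v)

/-- `H` is a homotopy on `Q` (a normal subgroupoid of the free groupoid `π(Q)`):
each `H v` is closed under free homotopy of walks, contains the identity, is closed under
composition and inverse (so it determines a subgroup of `π₁(Q,v) = π(Q)(v,v)`), and the family
is closed under conjugation by arbitrary walks. -/
structure IsHomotopy (Q : Quiv V) (H : HSet Q) : Prop where
  htpy_mem : ∀ {v : V} {w u : Walk Q v v}, WalkHtpy Q w u → w ∈ H v → u ∈ H v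
  nil_mem : ∀ v : V, Walk.nil v ∈ H v
  comp_mem : ∀ {v : V} {w u : Walk Q v v}, w ∈ H v → u ∈ H v → w.comp u ∈ H v
  inv_mem : ∀ {v : V} {w : Walk Q v v}, w ∈ H v → w.inv ∈ H v
  conj_mem : ∀ {x y : V} (g : Walk Q x y) {w : Walk Q x x},
    w ∈ H x → (g.inv.comp (w.comp g)) ∈ H y

/-- The oriented `2`-cycle determined by arrows `a : i → j` and `b : j → i`, as a cyclic
walk based at `i = s a`. -/
def twoCycle {Q : Quiv V} (a b : Q.Arrow) (h : Q.tgt a = Q.src b) (h' : Q.tgt b = Q.src a) :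
    Walk Q (Q.src a) (Q.src a) :=
  Walk.cons (.fwd a) ((Walk.single (.fwd b)).cast h.symm h')

/-- A homotopy is reduced if it contains no oriented `2`-cycle of `Q`. -/
def IsReducedH (Q : Quiv V) (H : HSet Q) : Prop :=
  ∀ (a b : Q.Arrow) (h : Q.tgt a = Q.src b) (h' : Q.tgt b = Q.src a),
    twoCycle a b h h' ∉ H (Q.src a)

/-- Two walks `w, u : x → y` represent the same morphism of the quotient groupoid
`π(Q)/H` iff `w⁻¹ u ∈ H`. -/
def HEquiv {Q : Quiv V} (H : HSet Q) {x y : V} (w u : Walk Q x y) : Prop :=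
  w.inv.comp u ∈ H y

/-- The trivial homotopy `𝟙`: only the identity morphisms, i.e. only walks homotopic
to the constant walk. -/
def trivH (Q : Quiv V) : HSet Q := fun v => {w | WalkHtpy Q w (.nil v)}

/-- The maximal homotopy `π(Q)`: all cyclic walks. -/
def maxH (Q : Quiv V) : HSet Q := fun _ => Set.univ

/-- The normal subgroupoid (homotopy) generated by a family `S` of cyclic walks. -/
def genH (Q : Quiv V) (S : HSet Q) : HSet Q := fun v =>
  {w | ∀ K : HSet Q, IsHomotopy Q K → (∀ x, S x ⊆ K x) → w ∈ K v}

/-- The squares of all cyclic walks; `genH Q (sqGens Q)` is the normal subgroupoid `π(Q)²`. -/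
def sqGens (Q : Quiv V) : HSet Q := fun v => {w | ∃ u : Walk Q v v, w = u.comp u}

/-- A morphism from the free groupoid on `Q` to the free groupoid on `R` (both over the same
vertex type, fixing all vertices), given by a choice of a walk in `R` for every arrow of `Q`. -/
structure QMap (Q R : Quiv V) where
  toWalk : (a : Q.Arrow) → Walk R (Q.src a) (Q.tgt a)

namespace QMap

/-- The image of a step. -/
def mapStep {Q R : Quiv V} (F : QMap Q R) : {x y : V} → Step Q x y → Walk R x y
  | _, _, .fwd a => F.toWalk a
  | _, _, .bwd a => (F.toWalk a).inv

/-- The induced map on walks. -/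
def mapWalk {Q R : Quiv V} (F : QMap Q R) : {x y : V} → Walk Q x y → Walk R x y
  | _, _, .nil v => .nil v
  | _, _, .cons e w => (F.mapStep e).comp (F.mapWalk w)

/-- Composition of `QMap`s. -/
def comp {Q R S : Quiv V} (F : QMap Q R) (G : QMap R S) : QMap Q S :=
  ⟨fun a => G.mapWalk (F.toWalk a)⟩

end QMap

/-- The kernel, relative to a homotopy `H` on `R`, of the functor `π(Q) → π(R)/H`
induced by a `QMap`: all cyclic walks whose image lies in `H`. -/
def kerH {Q R : Quiv V} (F : QMap Q R) (H : HSet R) : HSet Q :=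
  fun v => {w | F.mapWalk w ∈ H v}

/-- A (vertex-fixing) isomorphism of quivers over the same vertex type. -/
structure QIso (Q R : Quiv V) where
  arr : Q.Arrow ≃ R.Arrow
  src_eq : ∀ a, R.src (arr a) = Q.src a
  tgt_eq : ∀ a, R.tgt (arr a) = Q.tgt a

/-- The `QMap` underlying a quiver isomorphism. -/
def QIso.toQMap {Q R : Quiv V} (f : QIso Q R) : QMap Q R :=
  ⟨fun a => (Walk.single (.fwd (f.arr a))).cast (f.src_eq a) (f.tgt_eq a)⟩

/-- The pre-mutation `μ̃_k(Q)` of a loop-free quiver `Q` at the vertex `k`: arrows of `Q` not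
incident to `k` are kept, arrows incident to `k` are replaced by reversed arrows `γ*`, and
for every pair of arrows `α, β` with `s α = t β = k` and `s β ≠ t α` a new composite arrow
`[αβ] : s β → t α` is added. -/
def preMut (Q : Quiv V) (k : V) : Quiv V where
  Arrow := {a : Q.Arrow // Q.src a ≠ k ∧ Q.tgt a ≠ k} ⊕
    ({a : Q.Arrow // Q.src a = k ∨ Q.tgt a = k} ⊕
     {p : Q.Arrow × Q.Arrow // Q.src p.1 = k ∧ Q.tgt p.2 = k ∧ Q.src p.2 ≠ Q.tgt p.1})
  src x := match x with
    | .inl a => Q.src a.1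
    | .inr (.inl a) => Q.tgt a.1
    | .inr (.inr p) => Q.src p.1.2
  tgt x := match x with
    | .inl a => Q.tgt a.1
    | .inr (.inl a) => Q.src a.1
    | .inr (.inr p) => Q.tgt p.1.1

/-- The canonical functor `φ : π(μ̃_k Q) → π(Q)` (to be composed with `π(Q) → π(Q)/H`):
it fixes all vertices, sends a kept arrow `γ` to `γ`, a reversed arrow `γ*` to `γ⁻¹`, and a
composite arrow `[αβ]` to the walk `αβ`. -/
def phiQMap (Q : Quiv V) (k : V) : QMap (preMut Q k) Q where
  toWalk x := match x with
    | .inl a => Walk.single (.fwd a.1)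
    | .inr (.inl a) => Walk.single (.bwd a.1)
    | .inr (.inr p) => Walk.cons (.fwd p.1.2)
        ((Walk.single (.fwd p.1.1)).cast (p.2.1.trans p.2.2.1.symm) rfl)

/-- The homotopy `H' = ker (φ : π(μ̃_k Q) → π(Q)/H)` of the pre-mutation `μ̃_k(Q,H) = (Q',H')`. -/
def preH (Q : Quiv V) (H : HSet Q) (k : V) : HSet (preMut Q k) := kerH (phiQMap Q k) H

/-- The subquiver of `R` obtained by deleting the arrows in `S`. -/
def restrictQ (R : Quiv V) (S : Set R.Arrow) : Quiv V where
  Arrow := {a : R.Arrow // a ∉ S}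
  src a := R.src a.1
  tgt a := R.tgt a.1

/-- The inclusion `QMap` of a subquiver. -/
def inclQMap (R : Quiv V) (S : Set R.Arrow) : QMap (restrictQ R S) R :=
  ⟨fun a => Walk.single (.fwd a.1)⟩

/-- A deletion of `2`-cycles lying in a homotopy `H` on a quiver `R`, away from the
vertex `k`: a collection of pairwise disjoint pairs of opposite arrows `(γ, δ)` between two
distinct vertices `i ≠ j`, both different from `k`, such that each composite `2`-cycle `γδ`
lies in `H`. -/
structure TwoCycleDeletion (R : Quiv V) (H : HSet R) (k : V) where
  pairs : Set (R.Arrow × R.Arrow)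
  endpoints : ∀ q ∈ pairs, R.tgt q.1 = R.src q.2 ∧ R.tgt q.2 = R.src q.1
  src_ne_k : ∀ q ∈ pairs, R.src q.1 ≠ k
  tgt_ne_k : ∀ q ∈ pairs, R.tgt q.1 ≠ k
  src_ne_tgt : ∀ q ∈ pairs, R.src q.1 ≠ R.tgt q.1
  mem_H : ∀ q ∈ pairs, ∀ (h : R.tgt q.1 = R.src q.2) (h' : R.tgt q.2 = R.src q.1),
    twoCycle q.1 q.2 h h' ∈ H (R.src q.1)
  disjoint : ∀ q ∈ pairs, ∀ q' ∈ pairs, q ≠ q' →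
    q.1 ≠ q'.1 ∧ q.1 ≠ q'.2 ∧ q.2 ≠ q'.1 ∧ q.2 ≠ q'.2

namespace TwoCycleDeletion

variable {R : Quiv V} {H : HSet R} {k : V}

/-- The set of deleted arrows. -/
def deleted (D : TwoCycleDeletion R H k) : Set R.Arrow :=
  {a | ∃ q ∈ D.pairs, a = q.1 ∨ a = q.2}

/-- A deletion is maximal if no `2`-cycle lying in `H` (between two distinct vertices, both
different from `k`) survives it.  This is the result of the iterative deletion procedure. -/
def Maximal (D : TwoCycleDeletion R H k) : Prop :=
  ∀ γ δ : R.Arrow, γ ∉ D.deleted → δ ∉ D.deleted →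
    R.src γ ≠ k → R.tgt γ ≠ k → R.src γ ≠ R.tgt γ →
    ∀ (h : R.tgt γ = R.src δ) (h' : R.tgt δ = R.src γ),
      twoCycle γ δ h h' ∉ H (R.src γ)

end TwoCycleDeletion

/-- The quiver `Q†` of the mutation `μ_k(Q,H) = (Q†,H†)` determined by a choice `D` of
deleted `2`-cycles. -/
def mutQuiv (Q : Quiv V) (H : HSet Q) (k : V)
    (D : TwoCycleDeletion (preMut Q k) (preH Q H k) k) : Quiv V :=
  restrictQ (preMut Q k) D.deleted

/-- The homotopy `H† = ker (ψ : π(Q†) → π(Q')/H')` of the mutation `μ_k(Q,H) = (Q†,H†)`,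
where `ψ` is induced by the inclusion `Q† ⊆ Q'`. -/
def mutH (Q : Quiv V) (H : HSet Q) (k : V)
    (D : TwoCycleDeletion (preMut Q k) (preH Q H k) k) : HSet (mutQuiv Q H k D) :=
  kerH (inclQMap (preMut Q k) D.deleted) (preH Q H k)

/-- `(R, K)` is (isomorphic, by a vertex-fixing isomorphism matching the homotopies, to)
the mutation `μ_k(Q, H)` of the quiver with homotopy `(Q, H)` in direction `k`. -/
def IsMutationStep (Q : Quiv V) (H : HSet Q) (k : V) (R : Quiv V) (K : HSet R) : Prop :=
  ∃ D : TwoCycleDeletion (preMut Q k) (preH Q H k) k, D.Maximal ∧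
    ∃ f : QIso (mutQuiv Q H k D) R,
      ∀ (v : V) (w : Walk (mutQuiv Q H k D) v v),
        w ∈ mutH Q H k D v ↔ f.toQMap.mapWalk w ∈ K v

/-- A `QMap` `F : π(Q) → π(R)` induces an isomorphism of quotient groupoids
`π(Q)/H_Q ≅ π(R)/H_R` (it is the identity on objects, well defined, full and faithful
on all morphism sets). -/
structure InducesQuotIso {Q R : Quiv V} (F : QMap Q R) (HQ : HSet Q) (HR : HSet R) : Prop where
  maps : ∀ {x y : V} (w u : Walk Q x y), HEquiv HQ w u → HEquiv HR (F.mapWalk w) (F.mapWalk u)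
  full : ∀ {x y : V} (w : Walk R x y), ∃ u : Walk Q x y, HEquiv HR (F.mapWalk u) w
  faithful : ∀ {x y : V} (w u : Walk Q x y),
    HEquiv HR (F.mapWalk w) (F.mapWalk u) → HEquiv HQ w u

/-- A deletion datum for the Fomin–Zelevinsky mutation: a collection of pairwise disjoint
pairs of opposite arrows (oriented `2`-cycles). -/
structure FZDeletion (R : Quiv V) where
  pairs : Set (R.Arrow × R.Arrow)
  endpoints : ∀ q ∈ pairs, R.tgt q.1 = R.src q.2 ∧ R.tgt q.2 = R.src q.1
  disjoint : ∀ q ∈ pairs, ∀ q' ∈ pairs, q ≠ q' →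
    q.1 ≠ q'.1 ∧ q.1 ≠ q'.2 ∧ q.2 ≠ q'.1 ∧ q.2 ≠ q'.2

/-- The arrows deleted by an `FZDeletion`. -/
def FZDeletion.deleted {R : Quiv V} (D : FZDeletion R) : Set R.Arrow :=
  {a | ∃ q ∈ D.pairs, a = q.1 ∨ a = q.2}

/-- `R` is (a representative of) the Fomin–Zelevinsky mutation `μ^FZ_k(Q)` of the `2`-acyclic
quiver `Q`: it is obtained from the pre-mutation of `Q` at `k` by deleting a maximal collection
of oriented `2`-cycles (so that the result is `2`-acyclic), up to vertex-fixing isomorphism. -/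
def IsFZMut (Q : Quiv V) (k : V) (R : Quiv V) : Prop :=
  ∃ D : FZDeletion (preMut Q k),
    (restrictQ (preMut Q k) D.deleted).TwoAcyclic ∧
    Nonempty (QIso (restrictQ (preMut Q k) D.deleted) R)

/-- Two homotopies `H, H'` on `Q` are equivalent if, for every mutation sequence, the
underlying quivers of the corresponding mutated quivers with homotopies are isomorphic by
vertex-fixing isomorphisms. -/
def HomotopyEquivalent (Q : Quiv V) (H H' : HSet Q) : Prop :=
  ∀ (ℓ : ℕ) (ks : ℕ → V)
    (Qs : ℕ → Quiv V) (Hs : ∀ i, HSet (Qs i))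
    (Qs' : ℕ → Quiv V) (Hs' : ∀ i, HSet (Qs' i)),
    Qs 0 = Q → HEq (Hs 0) H → Qs' 0 = Q → HEq (Hs' 0) H' →
    (∀ i < ℓ, IsMutationStep (Qs i) (Hs i) (ks i) (Qs (i + 1)) (Hs (i + 1))) →
    (∀ i < ℓ, IsMutationStep (Qs' i) (Hs' i) (ks i) (Qs' (i + 1)) (Hs' (i + 1))) →
    Nonempty (QIso (Qs ℓ) (Qs' ℓ))

/-- The relation on vertices generated by the arrows (connectivity). -/
def adjRel (Q : Quiv V) : V → V → Prop := fun x y =>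
  ∃ a : Q.Arrow, (Q.src a = x ∧ Q.tgt a = y) ∨ (Q.src a = y ∧ Q.tgt a = x)

/-- The number of connected components of the underlying graph. -/
noncomputable def componentCount (Q : Quiv V) : ℕ := Nat.card (Quot (adjRel Q))

/-- The rank of the fundamental group of (the underlying graph of) a finite quiver:
`|Q₁| - |Q₀| + (number of connected components)`. -/
noncomputable def fundGroupRank (Q : Quiv V) : ℤ :=
  (Nat.card Q.Arrow : ℤ) - (Nat.card V : ℤ) + (componentCount Q : ℤ)

end CMu

/-!
Sort the arrows of `Q'` into classes: two arrows lie in the same class when they have the same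
endpoints and the same image in `π(Q')/H'`. A `2`-cycle `γδ` lies in `H'` exactly when the
class of `δ` is the inverse of the class of `γ`. Hence a deletion removes as many arrows from a
class `c` as from `c⁻¹`, removes nothing from classes touching `k` or consisting of loops, and,
if maximal, leaves survivors in at most one of `c`, `c⁻¹`. With finitely many arrows per class,
the number of survivors in `c` is therefore `|c|` if `c` touches `k` or consists of loops and
`max 0 (|c| - |c⁻¹|)` otherwise, whatever the deletion.
Matching the survivors of the two deletions class by class gives `η`, and `ψ₂ ∘ η = ψ₁` because
matched arrows have the same image in `π(Q')/H'`.
-/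

namespace CMu

section

variable {V : Type}

@[simp] lemma Step.inv_inv {Q : Quiv V} {x y : V} (e : Step Q x y) : e.inv.inv = e := by
  cases e <;> rfl

namespace Walk

variable {Q : Quiv V}

@[simp] lemma comp_nil : ∀ {x y : V} (w : Walk Q x y), w.comp (.nil y) = w
  | _, _, .nil _ => rfl
  | _, _, .cons e w => congrArg (Walk.cons e) (comp_nil w)

lemma comp_assoc : ∀ {x y z t : V} (w : Walk Q x y) (u : Walk Q y z) (s : Walk Q z t),
    (w.comp u).comp s = w.comp (u.comp s)
  | _, _, _, _, .nil _, _, _ => rfl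
  | _, _, _, _, .cons e w, u, s => congrArg (Walk.cons e) (comp_assoc w u s)

lemma inv_comp : ∀ {x y z : V} (w : Walk Q x y) (u : Walk Q y z),
    (w.comp u).inv = u.inv.comp w.inv
  | _, _, _, .nil _, u => (comp_nil u.inv).symm
  | _, _, _, .cons e w, u => by
      change (w.comp u).inv.comp (single e.inv) = u.inv.comp (w.inv.comp (single e.inv))
      rw [inv_comp w u, comp_assoc]

@[simp] lemma inv_inv : ∀ {x y : V} (w : Walk Q x y), w.inv.inv = w
  | _, _, .nil _ => rfl
  | _, _, .cons e w => by
      change (w.inv.comp (single e.inv)).inv = Walk.cons e w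
      rw [inv_comp, inv_inv w]
      change Walk.cons e.inv.inv w = _
      rw [Step.inv_inv]

end Walk

namespace WalkHtpy

variable {Q : Quiv V}

lemma comp_right {x y z : V} {w u : Walk Q x y} (h : WalkHtpy Q w u) (t : Walk Q y z) :
    WalkHtpy Q (w.comp t) (u.comp t) := by
  induction h generalizing z with
  | refl w => exact .refl _
  | symm _ ih => exact (ih t).symm
  | trans _ _ ih₁ ih₂ => exact (ih₁ t).trans (ih₂ t)
  | cancel e w => exact .cancel e (w.comp t)
  | congr e _ ih => exact .congr e (ih t)

lemma comp_left : ∀ {x y z : V} (w : Walk Q x y) {u t : Walk Q y z},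
    WalkHtpy Q u t → WalkHtpy Q (w.comp u) (w.comp t)
  | _, _, _, .nil _, _, _, h => h
  | _, _, _, .cons e w, _, _, h => .congr e (comp_left w h)

lemma comp_inv_nil {x y : V} (w : Walk Q x y) : WalkHtpy Q (w.comp w.inv) (.nil x) := by
  induction w with
  | nil => exact .refl _
  | cons e w ih =>
      change WalkHtpy Q (Walk.cons e (w.comp (w.inv.comp (Walk.single e.inv)))) _
      rw [← Walk.comp_assoc]
      exact (WalkHtpy.congr e (ih.comp_right _)).trans (.cancel e (.nil _))

lemma inv_comp_nil {x y : V} (w : Walk Q x y) : WalkHtpy Q (w.inv.comp w) (.nil y) := by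
  simpa using comp_inv_nil w.inv

end WalkHtpy

namespace IsHomotopy

variable {Q : Quiv V} {H : HSet Q} (hH : IsHomotopy Q H)
include hH

lemma hequiv_refl {x y : V} (w : Walk Q x y) : HEquiv H w w :=
  hH.htpy_mem (WalkHtpy.inv_comp_nil w).symm (hH.nil_mem _)

lemma hequiv_symm {x y : V} {w u : Walk Q x y} (h : HEquiv H w u) : HEquiv H u w := by
  simpa [HEquiv, Walk.inv_comp] using hH.inv_mem h

lemma hequiv_trans {x y : V} {w u t : Walk Q x y} (h₁ : HEquiv H w u) (h₂ : HEquiv H u t) :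
    HEquiv H w t := by
  refine hH.htpy_mem ?_ (hH.comp_mem h₁ h₂)
  rw [Walk.comp_assoc]
  refine WalkHtpy.comp_left w.inv ?_
  rw [← Walk.comp_assoc]
  exact (WalkHtpy.comp_inv_nil u).comp_right t

lemma hequiv_equivalence {x y : V} : Equivalence (HEquiv H : Walk Q x y → Walk Q x y → Prop) :=
  ⟨hH.hequiv_refl, hH.hequiv_symm, hH.hequiv_trans⟩

lemma hequiv_comp {x y z : V} {w w' : Walk Q x y} {u u' : Walk Q y z}
    (h₁ : HEquiv H w w') (h₂ : HEquiv H u u') : HEquiv H (w.comp u) (w'.comp u') := by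
  -- `(w u)⁻¹ (w' u') ≃ u⁻¹ (w⁻¹ w') u · u⁻¹ u'`: a conjugate of `h₁` times `h₂`
  refine hH.htpy_mem ?_ (hH.comp_mem (hH.conj_mem u h₁) h₂)
  rw [Walk.comp_assoc u.inv, Walk.comp_assoc (w.inv.comp w'), Walk.comp_assoc w.inv,
    Walk.inv_comp w u, Walk.comp_assoc u.inv w.inv]
  refine WalkHtpy.comp_left _ (WalkHtpy.comp_left _ (WalkHtpy.comp_left _ ?_))
  rw [← Walk.comp_assoc]
  exact (WalkHtpy.comp_inv_nil u).comp_right u'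

lemma hequiv_inv {x y : V} {w u : Walk Q x y} (h : HEquiv H w u) : HEquiv H w.inv u.inv := by
  have hconj := hH.conj_mem u.inv (hH.hequiv_symm h)
  rw [Walk.inv_inv] at hconj
  change w.inv.inv.comp u.inv ∈ H x
  rw [Walk.inv_inv]
  refine hH.htpy_mem ?_ hconj
  rw [Walk.comp_assoc, ← Walk.comp_assoc u u.inv]
  exact (WalkHtpy.comp_inv_nil u).comp_right _

lemma comp_mem_iff_hequiv {x y : V} (w : Walk Q x y) (u : Walk Q y x) :
    w.comp u ∈ H x ↔ HEquiv H u w.inv := by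
  rw [HEquiv, ← Walk.inv_comp]
  exact ⟨hH.inv_mem, fun h => by simpa using hH.inv_mem h⟩

end IsHomotopy

namespace QMap

variable {Q R : Quiv V} (F : QMap Q R)

lemma mapWalk_comp : ∀ {x y z : V} (w : Walk Q x y) (u : Walk Q y z),
    F.mapWalk (w.comp u) = (F.mapWalk w).comp (F.mapWalk u)
  | _, _, _, .nil _, _ => rfl
  | _, _, _, .cons e w, u => by
      change (F.mapStep e).comp (F.mapWalk (w.comp u)) = _
      rw [mapWalk_comp w u, ← Walk.comp_assoc]
      rfl

lemma mapStep_inv {x y : V} (e : Step Q x y) : F.mapStep e.inv = (F.mapStep e).inv := by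
  cases e with
  | fwd a => rfl
  | bwd a => exact (Walk.inv_inv _).symm

lemma mapWalk_single {x y : V} (e : Step Q x y) : F.mapWalk (Walk.single e) = F.mapStep e :=
  Walk.comp_nil _

lemma mapWalk_inv : ∀ {x y : V} (w : Walk Q x y), F.mapWalk w.inv = (F.mapWalk w).inv
  | _, _, .nil _ => rfl
  | _, _, .cons e w => by
      change F.mapWalk (w.inv.comp (Walk.single e.inv)) = ((F.mapStep e).comp (F.mapWalk w)).inv
      rw [mapWalk_comp, mapWalk_inv w, Walk.inv_comp, mapWalk_single, mapStep_inv]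

lemma mapWalk_cast {x y x' y' : V} (hx : x = x') (hy : y = y') (w : Walk Q x y) :
    F.mapWalk (w.cast hx hy) = (F.mapWalk w).cast hx hy := by
  subst hx hy; rfl

lemma mapWalk_htpy {x y : V} {w u : Walk Q x y} (h : WalkHtpy Q w u) :
    WalkHtpy R (F.mapWalk w) (F.mapWalk u) := by
  induction h with
  | refl w => exact .refl _
  | symm _ ih => exact ih.symm
  | trans _ _ ih₁ ih₂ => exact ih₁.trans ih₂
  | cancel e w =>
      change WalkHtpy R ((F.mapStep e).comp ((F.mapStep e.inv).comp (F.mapWalk w))) _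
      rw [mapStep_inv, ← Walk.comp_assoc]
      exact (WalkHtpy.comp_inv_nil _).comp_right _
  | congr e _ ih => exact WalkHtpy.comp_left (F.mapStep e) ih

lemma comp_mapWalk {S : Quiv V} (G : QMap R S) :
    ∀ {x y : V} (w : Walk Q x y), (F.comp G).mapWalk w = G.mapWalk (F.mapWalk w)
  | _, _, .nil _ => rfl
  | _, _, .cons e w => by
      have hstep : (F.comp G).mapStep e = G.mapWalk (F.mapStep e) := by
        cases e with
        | fwd a => rfl
        | bwd a => exact (G.mapWalk_inv _).symm
      change ((F.comp G).mapStep e).comp ((F.comp G).mapWalk w) = _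
      rw [hstep, comp_mapWalk G w, ← mapWalk_comp]
      rfl

lemma hequiv_mapWalk {K : HSet R} (hK : IsHomotopy R K) {F G : QMap Q R}
    (h : ∀ a, HEquiv K (F.toWalk a) (G.toWalk a)) :
    ∀ {x y : V} (w : Walk Q x y), HEquiv K (F.mapWalk w) (G.mapWalk w)
  | _, _, .nil _ => hK.hequiv_refl _
  | _, _, .cons e w => by
      refine hK.hequiv_comp ?_ (hequiv_mapWalk hK h w)
      cases e with
      | fwd a => exact h a
      | bwd a => exact hK.hequiv_inv (h a)

end QMap

lemma IsHomotopy.kerH {Q R : Quiv V} {H : HSet R} (hH : IsHomotopy R H) (F : QMap Q R) :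
    IsHomotopy Q (kerH F H) where
  htpy_mem h hw := hH.htpy_mem (F.mapWalk_htpy h) hw
  nil_mem v := hH.nil_mem v
  comp_mem {v w u} hw hu := by
    change F.mapWalk (w.comp u) ∈ H v
    rw [QMap.mapWalk_comp]
    exact hH.comp_mem hw hu
  inv_mem {v w} hw := by
    change F.mapWalk w.inv ∈ H v
    rw [QMap.mapWalk_inv]
    exact hH.inv_mem hw
  conj_mem {x y} g {w} hw := by
    change F.mapWalk (g.inv.comp (w.comp g)) ∈ H y
    rw [QMap.mapWalk_comp, QMap.mapWalk_inv, QMap.mapWalk_comp]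
    exact hH.conj_mem (F.mapWalk g) hw

/-- The morphisms of the quotient groupoid `π(R)/K`, each tagged with its endpoints. -/
def WalkClass (R : Quiv V) (K : HSet R) : Type :=
  Σ i j : V, Quot (HEquiv K : Walk R i j → Walk R i j → Prop)

namespace WalkClass

variable {R : Quiv V} {K : HSet R}

variable (K) in
def mk {i j : V} (w : Walk R i j) : WalkClass R K := ⟨i, j, Quot.mk _ w⟩

lemma mk_eq_mk_iff (hK : IsHomotopy R K) {i i' j j' : V} {w : Walk R i j} {w' : Walk R i' j'} :
    mk K w = mk K w' ↔ ∃ (hi : i = i') (hj : j = j'), HEquiv K (w.cast hi hj) w' := by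
  constructor
  · intro h
    obtain ⟨rfl, h⟩ := Sigma.mk.inj_iff.mp h
    obtain ⟨rfl, h⟩ := Sigma.mk.inj_iff.mp (eq_of_heq h)
    exact ⟨rfl, rfl, hK.hequiv_equivalence.eqvGen_iff.mp (Quot.eq.mp (eq_of_heq h))⟩
  · rintro ⟨rfl, rfl, h⟩
    exact congrArg (fun q => (⟨i, j, q⟩ : WalkClass R K)) (Quot.sound h)

def inv (hK : IsHomotopy R K) (c : WalkClass R K) : WalkClass R K :=
  ⟨c.2.1, c.1, Quot.map Walk.inv (fun _ _ => hK.hequiv_inv) c.2.2⟩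

@[simp] lemma inv_mk (hK : IsHomotopy R K) {i j : V} (w : Walk R i j) :
    (mk K w).inv hK = mk K w.inv := rfl

@[simp] lemma inv_inv (hK : IsHomotopy R K) (c : WalkClass R K) : (c.inv hK).inv hK = c := by
  obtain ⟨i, j, q⟩ := c
  induction q using Quot.ind with
  | _ w => exact congrArg (mk K) (Walk.inv_inv w)

end WalkClass

variable {R : Quiv V} {K : HSet R}

variable (K) in
def arrowClass (a : R.Arrow) : WalkClass R K := WalkClass.mk K (Walk.single (.fwd a))

variable (K) in
def classFiber (c : WalkClass R K) : Set R.Arrow := {a | arrowClass K a = c}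

lemma src_eq_of_mem_classFiber {a : R.Arrow} {c : WalkClass R K} (h : a ∈ classFiber K c) :
    R.src a = c.1 :=
  congrArg Sigma.fst h

lemma tgt_eq_of_mem_classFiber {a : R.Arrow} {c : WalkClass R K} (h : a ∈ classFiber K c) :
    R.tgt a = c.2.1 :=
  congrArg (fun c : WalkClass R K => c.2.1) h

lemma classFiber_finite (hfin : ∀ i, {a : R.Arrow | R.src a = i}.Finite) (c : WalkClass R K) :
    (classFiber K c).Finite :=
  (hfin c.1).subset fun _ => src_eq_of_mem_classFiber

lemma twoCycle_mem_iff (hK : IsHomotopy R K) (a b : R.Arrow) (h : R.tgt a = R.src b)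
    (h' : R.tgt b = R.src a) :
    twoCycle a b h h' ∈ K (R.src a) ↔ arrowClass K b = (arrowClass K a).inv hK := by
  rw [arrowClass, arrowClass, WalkClass.inv_mk, WalkClass.mk_eq_mk_iff hK]
  exact (hK.comp_mem_iff_hequiv (Walk.single (.fwd a)) _).trans
    ⟨fun hw => ⟨h.symm, h', hw⟩, fun ⟨_, _, hw⟩ => hw⟩

namespace TwoCycleDeletion

variable {k : V}

section

variable (D : TwoCycleDeletion R K k)

lemma mem_deleted_endpoints {a : R.Arrow} (ha : a ∈ D.deleted) :
    R.src a ≠ k ∧ R.tgt a ≠ k ∧ R.src a ≠ R.tgt a := by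
  obtain ⟨q, hq, rfl | rfl⟩ := ha
  · exact ⟨D.src_ne_k q hq, D.tgt_ne_k q hq, D.src_ne_tgt q hq⟩
  · rw [← (D.endpoints q hq).1, (D.endpoints q hq).2]
    exact ⟨D.tgt_ne_k q hq, D.src_ne_k q hq, (D.src_ne_tgt q hq).symm⟩

lemma fst_ne_snd {q : R.Arrow × R.Arrow} (hq : q ∈ D.pairs) : q.1 ≠ q.2 := fun h =>
  D.src_ne_tgt q hq (by rw [(D.endpoints q hq).1, h])

lemma eq_of_mem_pairs {q q' : R.Arrow × R.Arrow} (hq : q ∈ D.pairs) (hq' : q' ∈ D.pairs)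
    {a : R.Arrow} (ha : a = q.1 ∨ a = q.2) (ha' : a = q'.1 ∨ a = q'.2) : q = q' := by
  by_contra hne
  obtain ⟨h₁, h₂, h₃, h₄⟩ := D.disjoint q hq q' hq' hne
  rcases ha with rfl | rfl <;> rcases ha' with h | h <;> tauto

def pairArrow : D.pairs ⊕ D.pairs → D.deleted :=
  Sum.elim (fun q => ⟨q.1.1, q, q.2, .inl rfl⟩) (fun q => ⟨q.1.2, q, q.2, .inr rfl⟩)

lemma pairArrow_bijective : Function.Bijective D.pairArrow := by
  refine ⟨?_, ?_⟩
  · rintro (q | q) (q' | q') h <;>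
      replace h : _ = _ := congrArg Subtype.val h <;> simp only [pairArrow, Sum.elim_inl,
        Sum.elim_inr] at h
    · exact congrArg Sum.inl (Subtype.ext (D.eq_of_mem_pairs q.2 q'.2 (.inl rfl) (.inl h)))
    · cases Subtype.ext (D.eq_of_mem_pairs q.2 q'.2 (.inl rfl) (.inr h))
      exact absurd h (D.fst_ne_snd q.2)
    · cases Subtype.ext (D.eq_of_mem_pairs q.2 q'.2 (.inr rfl) (.inl h))
      exact absurd h.symm (D.fst_ne_snd q.2)
    · exact congrArg Sum.inr (Subtype.ext (D.eq_of_mem_pairs q.2 q'.2 (.inr rfl) (.inr h)))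
  · rintro ⟨a, q, hq, rfl | rfl⟩
    exacts [⟨.inl ⟨q, hq⟩, rfl⟩, ⟨.inr ⟨q, hq⟩, rfl⟩]

noncomputable def pairsEquiv : D.pairs ⊕ D.pairs ≃ D.deleted :=
  Equiv.ofBijective _ D.pairArrow_bijective

noncomputable def partner : Equiv.Perm D.deleted :=
  (D.pairsEquiv.symm.trans (Equiv.sumComm _ _)).trans D.pairsEquiv

lemma partner_pairsEquiv (x : D.pairs ⊕ D.pairs) :
    D.partner (D.pairsEquiv x) = D.pairsEquiv x.swap := by
  simp [partner]

lemma arrowClass_snd (hK : IsHomotopy R K) {q : R.Arrow × R.Arrow} (hq : q ∈ D.pairs) :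
    arrowClass K q.2 = (arrowClass K q.1).inv hK :=
  (twoCycle_mem_iff hK _ _ _ _).mp (D.mem_H q hq (D.endpoints q hq).1 (D.endpoints q hq).2)

lemma arrowClass_partner (hK : IsHomotopy R K) (a : D.deleted) :
    arrowClass K (D.partner a).1 = (arrowClass K a.1).inv hK := by
  obtain ⟨q | q, rfl⟩ := D.pairsEquiv.surjective a
  all_goals rw [partner_pairsEquiv]
  · exact D.arrowClass_snd hK q.2
  · change arrowClass K q.1.1 = (arrowClass K q.1.2).inv hK
    rw [D.arrowClass_snd hK q.2, WalkClass.inv_inv]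

lemma ncard_classFiber_inter_deleted_inv (hK : IsHomotopy R K) (c : WalkClass R K) :
    (classFiber K c ∩ D.deleted).ncard = (classFiber K (c.inv hK) ∩ D.deleted).ncard := by
  refine Set.ncard_congr (fun a ha => (D.partner ⟨a, ha.2⟩).1)
    (fun a ha => ⟨?_, Subtype.prop _⟩)
    (fun a b ha hb h => congrArg Subtype.val (D.partner.injective (Subtype.ext h)))
    (fun b hb => ⟨(D.partner.symm ⟨b, hb.2⟩).1, ⟨?_, Subtype.prop _⟩, by simp⟩)
  · change arrowClass K _ = _
    rw [D.arrowClass_partner hK, (ha.1 : arrowClass K a = c)]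
  · have h := D.arrowClass_partner hK (D.partner.symm ⟨b, hb.2⟩)
    rw [Equiv.apply_symm_apply, hb.1] at h
    change arrowClass K _ = c
    simpa using (congrArg (WalkClass.inv hK) h).symm

end

lemma Maximal.classFiber_diff_eq_empty_or {D : TwoCycleDeletion R K k} (hD : D.Maximal)
    (hK : IsHomotopy R K) {c : WalkClass R K} (hs : c.1 ≠ k) (ht : c.2.1 ≠ k)
    (hst : c.1 ≠ c.2.1) :
    classFiber K c \ D.deleted = ∅ ∨ classFiber K (c.inv hK) \ D.deleted = ∅ := by
  by_contra! h
  obtain ⟨⟨γ, hγ, hγD⟩, ⟨δ, hδ, hδD⟩⟩ := h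
  have sγ := src_eq_of_mem_classFiber hγ
  have tγ := tgt_eq_of_mem_classFiber hγ
  have sδ := src_eq_of_mem_classFiber hδ
  have tδ := tgt_eq_of_mem_classFiber hδ
  refine hD γ δ hγD hδD (sγ ▸ hs) (tγ ▸ ht) (sγ ▸ tγ ▸ hst) (tγ.trans sδ.symm)
    (tδ.trans sγ.symm) ?_
  rw [twoCycle_mem_iff hK, (hδ : arrowClass K δ = _), (hγ : arrowClass K γ = _)]

lemma ncard_classFiber_diff_deleted_eq (hK : IsHomotopy R K)
    (hfin : ∀ i, {a : R.Arrow | R.src a = i}.Finite) {D₁ D₂ : TwoCycleDeletion R K k}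
    (hD₁ : D₁.Maximal) (hD₂ : D₂.Maximal) (c : WalkClass R K) :
    (classFiber K c \ D₁.deleted).ncard = (classFiber K c \ D₂.deleted).ncard := by
  have split := fun (D : TwoCycleDeletion R K k) (c : WalkClass R K) =>
    Set.ncard_inter_add_ncard_sdiff_eq_ncard (classFiber K c) D.deleted
      (classFiber_finite hfin c)
  by_cases hc : c.1 ≠ k ∧ c.2.1 ≠ k ∧ c.1 ≠ c.2.1
  · obtain ⟨hs, ht, hst⟩ := hc
    have := split D₁ c; have := split D₂ c
    have := split D₁ (c.inv hK); have := split D₂ (c.inv hK)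
    have := D₁.ncard_classFiber_inter_deleted_inv hK c
    have := D₂.ncard_classFiber_inter_deleted_inv hK c
    rcases hD₁.classFiber_diff_eq_empty_or hK hs ht hst with h₁ | h₁ <;>
    rcases hD₂.classFiber_diff_eq_empty_or hK hs ht hst with h₂ | h₂ <;>
    simp only [h₁, h₂, Set.ncard_empty] at * <;> omega
  · have nothing_deleted : ∀ D : TwoCycleDeletion R K k, classFiber K c ∩ D.deleted = ∅ :=
      fun D => Set.eq_empty_of_forall_notMem fun a ⟨ha, haD⟩ => hc <| by
        simpa only [src_eq_of_mem_classFiber ha, tgt_eq_of_mem_classFiber ha]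
          using D.mem_deleted_endpoints haD
    have h₁ := split D₁ c; have h₂ := split D₂ c
    rw [nothing_deleted, Set.ncard_empty] at h₁ h₂
    omega

def survivorsEquiv (D : TwoCycleDeletion R K k) (c : WalkClass R K) :
    {a : (restrictQ R D.deleted).Arrow // arrowClass K a.1 = c} ≃
      ↥(classFiber K c \ D.deleted) where
  toFun a := ⟨a.1.1, a.2, a.1.2⟩
  invFun a := ⟨⟨a.1, a.2.2⟩, a.2.1⟩

theorem exists_qIso_arrowClass (hK : IsHomotopy R K)
    (hfin : ∀ i, {a : R.Arrow | R.src a = i}.Finite) {D₁ D₂ : TwoCycleDeletion R K k}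
    (hD₁ : D₁.Maximal) (hD₂ : D₂.Maximal) :
    ∃ η : QIso (restrictQ R D₁.deleted) (restrictQ R D₂.deleted),
      ∀ a, arrowClass K (η.arr a).1 = arrowClass K a.1 := by
  have fiberEquiv : ∀ c : WalkClass R K,
      Nonempty (↥(classFiber K c \ D₁.deleted) ≃ ↥(classFiber K c \ D₂.deleted)) := fun c => by
    have := ((classFiber_finite hfin c).sdiff (t := D₁.deleted)).to_subtype
    have := ((classFiber_finite hfin c).sdiff (t := D₂.deleted)).to_subtype
    rw [← Finite.card_eq, Nat.card_coe_set_eq, Nat.card_coe_set_eq]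
    exact ncard_classFiber_diff_deleted_eq hK hfin hD₁ hD₂ c
  let e : ∀ c, {a : (restrictQ R D₁.deleted).Arrow // arrowClass K a.1 = c} ≃
      {a : (restrictQ R D₂.deleted).Arrow // arrowClass K a.1 = c} := fun c =>
    ((D₁.survivorsEquiv c).trans (fiberEquiv c).some).trans (D₂.survivorsEquiv c).symm
  let η := Equiv.ofFiberEquiv e
  have hη a : arrowClass K (η a).1 = arrowClass K a.1 := Equiv.ofFiberEquiv_map e a
  exact ⟨⟨η, fun a => congrArg Sigma.fst (hη a),
    fun a => congrArg (fun c : WalkClass R K => c.2.1) (hη a)⟩, hη⟩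

theorem exists_qIso_hequiv (hK : IsHomotopy R K)
    (hfin : ∀ i, {a : R.Arrow | R.src a = i}.Finite) {D₁ D₂ : TwoCycleDeletion R K k}
    (hD₁ : D₁.Maximal) (hD₂ : D₂.Maximal) :
    ∃ η : QIso (restrictQ R D₁.deleted) (restrictQ R D₂.deleted),
      ∀ (x y : V) (w : Walk (restrictQ R D₁.deleted) x y),
        HEquiv K ((inclQMap R D₂.deleted).mapWalk (η.toQMap.mapWalk w))
          ((inclQMap R D₁.deleted).mapWalk w) := by
  obtain ⟨η, hη⟩ := exists_qIso_arrowClass hK hfin hD₁ hD₂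
  refine ⟨η, fun x y w => ?_⟩
  rw [← QMap.comp_mapWalk]
  refine QMap.hequiv_mapWalk hK (fun a => ?_) w
  change HEquiv K ((inclQMap R D₂.deleted).mapWalk ((Walk.single (.fwd (η.arr a))).cast _ _)) _
  rw [QMap.mapWalk_cast, QMap.mapWalk_single]
  obtain ⟨_, _, h⟩ := (WalkClass.mk_eq_mk_iff hK).mp (hη a)
  exact h

end TwoCycleDeletion

def preMutSrcFiberEmbed (Q : Quiv V) (k i : V) :
    {a : (preMut Q k).Arrow // (preMut Q k).src a = i} →
      {a : Q.Arrow // Q.src a = i} ⊕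
        ({a : Q.Arrow // Q.tgt a = i} ⊕
          ({a : Q.Arrow // Q.src a = k} × {a : Q.Arrow // Q.src a = i}))
  | ⟨.inl a, h⟩ => .inl ⟨a.1, h⟩
  | ⟨.inr (.inl a), h⟩ => .inr (.inl ⟨a.1, h⟩)
  | ⟨.inr (.inr p), h⟩ => .inr (.inr (⟨p.1.1, p.2.1⟩, ⟨p.1.2, h⟩))

lemma preMutSrcFiberEmbed_injective (Q : Quiv V) (k i : V) :
    Function.Injective (preMutSrcFiberEmbed Q k i) := by
  rintro ⟨a | a | p, ha⟩ ⟨b | b | q, hb⟩ h <;>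
    simp only [preMutSrcFiberEmbed, Sum.inl.injEq, Sum.inr.injEq, reduceCtorEq, Subtype.ext_iff,
      Prod.ext_iff] at h
  · exact Subtype.ext (congrArg Sum.inl (Subtype.ext h))
  · exact Subtype.ext (congrArg (Sum.inr ∘ Sum.inl) (Subtype.ext h))
  · exact Subtype.ext (congrArg (Sum.inr ∘ Sum.inr) (Subtype.ext (Prod.ext h.1 h.2)))

lemma Quiv.LocallyFinite.finite_preMut_src {Q : Quiv V} (hlf : Q.LocallyFinite) (k i : V) :
    {a : (preMut Q k).Arrow | (preMut Q k).src a = i}.Finite := by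
  have : Finite {a : Q.Arrow // Q.src a = i} := (hlf i).1.to_subtype
  have : Finite {a : Q.Arrow // Q.tgt a = i} := (hlf i).2.to_subtype
  have : Finite {a : Q.Arrow // Q.src a = k} := (hlf k).1.to_subtype
  exact Set.finite_coe_iff.mp (Finite.of_injective _ (preMutSrcFiberEmbed_injective Q k i))

end

theorem mutation_unique_up_to_iso_general {V : Type} (Q : Quiv V) (H : HSet Q) (k : V)
    (hlf : Q.LocallyFinite)
    (hH : IsHomotopy Q H)
    (D₁ D₂ : TwoCycleDeletion (preMut Q k) (preH Q H k) k)
    (hD₁ : D₁.Maximal) (hD₂ : D₂.Maximal) :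
    ∃ η : QIso (mutQuiv Q H k D₁) (mutQuiv Q H k D₂),
      ∀ (x y : V) (w : Walk (mutQuiv Q H k D₁) x y),
        HEquiv (preH Q H k)
          ((inclQMap (preMut Q k) D₂.deleted).mapWalk (η.toQMap.mapWalk w))
          ((inclQMap (preMut Q k) D₁.deleted).mapWalk w) :=
  TwoCycleDeletion.exists_qIso_hequiv (hH.kerH _) (hlf.finite_preMut_src k) hD₁ hD₂

/-- **Mutation is well defined up to vertex-fixing isomorphism** (Lemma
`lemma: unique reduction up to iso`).  Let `(Q, H)` be a loop-free quiver with reduced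
homotopy, `k` a vertex and `(Q', H') = μ̃_k(Q, H)` the pre-mutation.  If `Q^{†,1}` and
`Q^{†,2}` are obtained from `Q'` by two (possibly different) maximal deletions `D₁, D₂` of
`2`-cycles lying in `H'`, then there is a vertex-fixing quiver isomorphism
`η : Q^{†,1} → Q^{†,2}` with `ψ₂ ∘ η = ψ₁` as functors to `π(Q')/H'`, where `ψ_v` is induced
by the inclusion `Q^{†,v} ⊆ Q'`. -/
theorem mutation_unique_up_to_iso {V : Type} (Q : Quiv V) (H : HSet Q) (k : V)
    (hlf : Q.LocallyFinite) (hloop : Q.LoopFree)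
    (hH : IsHomotopy Q H) (hred : IsReducedH Q H)
    (D₁ D₂ : TwoCycleDeletion (preMut Q k) (preH Q H k) k)
    (hD₁ : D₁.Maximal) (hD₂ : D₂.Maximal) :
    ∃ η : QIso (mutQuiv Q H k D₁) (mutQuiv Q H k D₂),
      ∀ (x y : V) (w : Walk (mutQuiv Q H k D₁) x y),
        HEquiv (preH Q H k)
          ((inclQMap (preMut Q k) D₂.deleted).mapWalk (η.toQMap.mapWalk w))
          ((inclQMap (preMut Q k) D₁.deleted).mapWalk w) :=
  mutation_unique_up_to_iso_general Q H k hlf hH D₁ D₂ hD₁ hD₂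

end CMu
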